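/- Let 2 < t₀ < T, let φ ∈ C¹([t₀, T)) be nonnegative, and suppose that δ ≤ K₁ t φ'(t) and φ(t)^{p₁} ≤ K₂ t (ln t)^{p₂−1} φ'(t) for all t ∈ (t₀, T), where δ, K₁, K₂ > 0 and p₁, p₂ > 1. If p₂ < p₁ + 1, then there exist positive constants δ₀ and K₃, depending on t₀, K₁, K₂, p₁, p₂ but independent of δ, such that T ≤ exp(K₃ δ^{−(p₁−1)/(p₁−p₂+1)}) for all δ ∈ (0, δ₀). -/
import Mathlib


open MeasureTheory Real Set Metric NNReal

noncomputable section

/-- If `f` has derivative `f'` on `[a,b]` and `f' ≥ 0` on `(a,b)`, then `f a ≤ f b`. -/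
lemma mono_aux {f f' : ℝ → ℝ} {a b : ℝ} (hab : a ≤ b)
    (hd : ∀ t ∈ Icc a b, HasDerivWithinAt f (f' t) (Icc a b) t)
    (h0 : ∀ t ∈ Ioo a b, 0 ≤ f' t) : f a ≤ f b := by
  have hmono : MonotoneOn f (Icc a b) := by
    apply monotoneOn_of_deriv_nonneg (convex_Icc a b)
    · exact fun t ht => (hd t ht).continuousWithinAt
    · intro t ht
      rw [interior_Icc] at ht
      exact (((hd t (Ioo_subset_Icc_self ht)).hasDerivAt
        (Icc_mem_nhds ht.1 ht.2)).differentiableAt).differentiableWithinAt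
    · intro t ht
      rw [interior_Icc] at ht
      rw [((hd t (Ioo_subset_Icc_self ht)).hasDerivAt (Icc_mem_nhds ht.1 ht.2)).deriv]
      exact h0 t ht
  exact hmono (left_mem_Icc.2 hab) (right_mem_Icc.2 hab) hab


theorem ode_blowup_lemma (t₀ K₁ K₂ p₁ p₂ : ℝ) (ht₀ : 2 < t₀)
    (hK₁ : 0 < K₁) (hK₂ : 0 < K₂) (hp₁ : 1 < p₁) (hp₂ : 1 < p₂) (hpp : p₂ < p₁ + 1) :
    ∃ δ₀ > (0:ℝ), ∃ K₃ > (0:ℝ), ∀ T δ : ℝ, ∀ φ φ' : ℝ → ℝ,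
      t₀ < T → 0 < δ → δ < δ₀ →
      (∀ t ∈ Ico t₀ T, 0 ≤ φ t) →
      (∀ t ∈ Ico t₀ T, HasDerivWithinAt φ (φ' t) (Ico t₀ T) t) →
      ContinuousOn φ' (Ico t₀ T) →
      (∀ t ∈ Ioo t₀ T, δ ≤ K₁ * t * φ' t) →
      (∀ t ∈ Ioo t₀ T, φ t ^ p₁ ≤ K₂ * t * Real.log t ^ (p₂ - 1) * φ' t) →
      T ≤ Real.exp (K₃ * δ ^ (-((p₁ - 1) / (p₁ - p₂ + 1)))) := by
  have hq : (0:ℝ) < p₁ - p₂ + 1 := by linarith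
  have hp₁1 : (0:ℝ) < p₁ - 1 := by linarith
  set C : ℝ := 2 * K₂ / (p₁ - 1) * (4 * K₁) ^ (p₁ - 1) with hCdef
  have hCpos : 0 < C := by
    apply mul_pos (by positivity)
    exact Real.rpow_pos_of_pos (by linarith) _
  have hlt₀ : 0 < Real.log t₀ := Real.log_pos (by linarith)
  set K₃ : ℝ := 4 * Real.log t₀ + 1 + (C + 1) ^ ((1:ℝ) / (p₁ - p₂ + 1)) with hK₃def
  have hCrt : 0 < (C + 1) ^ ((1:ℝ) / (p₁ - p₂ + 1)) := Real.rpow_pos_of_pos (by linarith) _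
  have hK₃pos : 0 < K₃ := by positivity
  -- key inequality on K₃ : log C < (p₁ - p₂ + 1) * log K₃
  have hK₃C : Real.log C < (p₁ - p₂ + 1) * Real.log K₃ := by
    have h1 : Real.log ((C + 1) ^ ((1:ℝ) / (p₁ - p₂ + 1))) < Real.log K₃ :=
      Real.log_lt_log hCrt (by linarith)
    rw [Real.log_rpow (by linarith)] at h1
    have h2 : Real.log C < Real.log (C + 1) := Real.log_lt_log hCpos (by linarith)
    have h3 := mul_lt_mul_of_pos_left h1 hq
    have hid : (p₁ - p₂ + 1) * ((1:ℝ) / (p₁ - p₂ + 1) * Real.log (C + 1))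
        = Real.log (C + 1) := by
      rw [← mul_assoc, mul_one_div, div_self (ne_of_gt hq), one_mul]
    rw [hid] at h3
    linarith
  refine ⟨1, one_pos, K₃, hK₃pos, ?_⟩
  intro T δ φ φ' hTt₀ hδ hδ1 hφ0 hφd _hφ'c h1 h2
  by_contra hcon
  push_neg at hcon
  set E : ℝ := δ ^ (-((p₁ - 1) / (p₁ - p₂ + 1))) with hEdef
  have hE1 : 1 < E := by
    rw [hEdef, Real.one_lt_rpow_iff_of_pos hδ]
    right
    constructor
    · linarith
    · rw [neg_lt, neg_zero]; positivity
  set S : ℝ := K₃ * E with hSdef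
  have hSK₃ : K₃ ≤ S := by
    rw [hSdef]
    linarith [mul_lt_mul_of_pos_left hE1 hK₃pos]
  have hS4 : 4 * Real.log t₀ + 1 ≤ S := by
    have h8 : 4 * Real.log t₀ + 1 ≤ K₃ := by rw [hK₃def]; linarith [hCrt]
    linarith
  have hS0 : 0 < S := by linarith
  set t₁ : ℝ := Real.exp (S / 2) with ht₁def
  set t₂ : ℝ := Real.exp S with ht₂def
  have ht₀pos : (0:ℝ) < t₀ := by linarith
  have hlogt₁ : Real.log t₁ = S / 2 := Real.log_exp _
  have hlogt₂ : Real.log t₂ = S := Real.log_exp _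
  have ht₀t₁ : t₀ < t₁ := by
    rw [ht₁def, ← Real.exp_log ht₀pos]
    exact Real.exp_lt_exp.2 (by linarith)
  have ht₁t₂ : t₁ < t₂ := Real.exp_lt_exp.2 (by linarith)
  have ht₂T : t₂ < T := hcon
  have ht₁pos : 0 < t₁ := Real.exp_pos _
  -- positivity of φ'
  have hφ'pos : ∀ t ∈ Ioo t₀ T, 0 < φ' t := by
    intro t ht
    have h := h1 t ht
    have htp : 0 < t := by linarith [ht.1]
    have hKt : (0:ℝ) < K₁ * t := by positivity
    by_contra hcontra
    push_neg at hcontra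
    linarith [mul_le_mul_of_nonneg_left hcontra (le_of_lt hKt)]
  -- Step A : φ t₁ ≥ (δ/K₁) * (S/2 - log t₀)
  have hsubA : Icc t₀ t₁ ⊆ Ico t₀ T := fun u hu => ⟨hu.1, by linarith [hu.2]⟩
  have hA : φ t₀ - δ / K₁ * (Real.log t₀ - Real.log t₀)
      ≤ φ t₁ - δ / K₁ * (Real.log t₁ - Real.log t₀) := by
    apply mono_aux (f := fun t => φ t - δ / K₁ * (Real.log t - Real.log t₀))
      (f' := fun t => φ' t - δ / K₁ * t⁻¹) (le_of_lt ht₀t₁)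
    · intro t ht
      have htpos : 0 < t := lt_of_lt_of_le ht₀pos ht.1
      exact ((hφd t (hsubA ht)).mono hsubA).sub
        ((((Real.hasDerivAt_log (ne_of_gt htpos)).hasDerivWithinAt).sub_const
          (Real.log t₀)).const_mul (δ / K₁))
    · intro t ht
      have htT : t ∈ Ioo t₀ T := ⟨ht.1, by linarith [ht.2]⟩
      have htpos : 0 < t := by linarith [ht.1]
      have hh := h1 t htT
      have hkey : δ / K₁ * t⁻¹ ≤ φ' t := by
        rw [show δ / K₁ * t⁻¹ = δ / (K₁ * t) by field_simp]
        rw [div_le_iff₀ (by positivity)]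
        linarith
      linarith
  have hL : δ * S / (4 * K₁) ≤ φ t₁ := by
    have hφt₀ : 0 ≤ φ t₀ := hφ0 t₀ ⟨le_refl _, hTt₀⟩
    rw [hlogt₁] at hA
    have hmul : δ / K₁ * (S / 4) ≤ δ / K₁ * (S / 2 - Real.log t₀) :=
      mul_le_mul_of_nonneg_left (by linarith) (by positivity)
    have : δ * S / (4 * K₁) = δ / K₁ * (S / 4) := by ring
    rw [this]
    simp only [sub_self, mul_zero, sub_zero] at hA
    linarith
  set L : ℝ := δ * S / (4 * K₁) with hLdef
  have hLpos : 0 < L := by positivity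
  -- Step B : L ≤ φ t on [t₁, t₂]
  have hsubC : Icc t₁ t₂ ⊆ Ico t₀ T := fun u hu => ⟨by linarith [hu.1], by linarith [hu.2]⟩
  have hφB : ∀ t ∈ Icc t₁ t₂, L ≤ φ t := by
    intro t ht
    have hsub' : Icc t₁ t ⊆ Ico t₀ T := fun u hu =>
      ⟨by linarith [hu.1], by linarith [hu.2, ht.2]⟩
    have : φ t₁ ≤ φ t := by
      apply mono_aux (f := φ) (f' := φ') ht.1
      · intro u hu
        exact (hφd u (hsub' hu)).mono hsub'
      · intro u hu
        exact le_of_lt (hφ'pos u ⟨by linarith [hu.1], by linarith [hu.2, ht.2]⟩)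
    linarith
  -- Step C : Riccati comparison on [t₁, t₂]
  set c : ℝ := (p₁ - 1) / (K₂ * S ^ (p₂ - 1)) with hcdef
  have hSp : 0 < S ^ (p₂ - 1) := Real.rpow_pos_of_pos hS0 _
  have hcpos : 0 < c := by positivity
  have hC2 : -(φ t₁ ^ (1 - p₁)) - c * Real.log t₁ ≤ -(φ t₂ ^ (1 - p₁)) - c * Real.log t₂ := by
    apply mono_aux (f := fun t => -(φ t ^ (1 - p₁)) - c * Real.log t)
      (f' := fun t => -(φ' t * (1 - p₁) * φ t ^ (1 - p₁ - 1)) - c * t⁻¹) (le_of_lt ht₁t₂)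
    · intro t ht
      have htpos : 0 < t := lt_of_lt_of_le ht₁pos ht.1
      have hφt : 0 < φ t := lt_of_lt_of_le hLpos (hφB t ht)
      exact (((hφd t (hsubC ht)).mono hsubC).rpow_const (Or.inl (ne_of_gt hφt))).neg.sub
        (((Real.hasDerivAt_log (ne_of_gt htpos)).hasDerivWithinAt).const_mul c)
    · intro t ht
      have htT : t ∈ Ioo t₀ T := ⟨by linarith [ht.1], by linarith [ht.2]⟩
      have htpos : 0 < t := by linarith [htT.1]
      have hφt : 0 < φ t := lt_of_lt_of_le hLpos (hφB t (Ioo_subset_Icc_self ht))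
      have hφ't : 0 < φ' t := hφ'pos t htT
      have hlogt : Real.log t ^ (p₂ - 1) ≤ S ^ (p₂ - 1) := by
        apply Real.rpow_le_rpow _ _ (by linarith)
        · calc (0:ℝ) ≤ Real.log t₁ := by rw [hlogt₁]; linarith
            _ ≤ Real.log t := Real.log_le_log ht₁pos (le_of_lt ht.1)
        · calc Real.log t ≤ Real.log t₂ := Real.log_le_log htpos (le_of_lt ht.2)
            _ = S := hlogt₂
      have h3 : φ t ^ p₁ ≤ K₂ * t * S ^ (p₂ - 1) * φ' t := by
        have hh := h2 t htT
        have hstep := mul_le_mul_of_nonneg_right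
          (mul_le_mul_of_nonneg_left hlogt (le_of_lt (mul_pos hK₂ htpos))) (le_of_lt hφ't)
        linarith
      set P : ℝ := φ t ^ (1 - p₁ - 1) with hPdef
      have hPeq : P = (φ t ^ p₁)⁻¹ := by
        rw [hPdef, show (1 - p₁ - 1) = -p₁ by ring, Real.rpow_neg (le_of_lt hφt)]
      have hφp₁pos : 0 < φ t ^ p₁ := Real.rpow_pos_of_pos hφt _
      have hPpos : 0 < P := by rw [hPeq]; positivity
      have hmul1 : φ t ^ p₁ * P = 1 := by rw [hPeq]; field_simp
      have hKtS : 0 < K₂ * t * S ^ (p₂ - 1) := by positivity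
      have h4 : 1 ≤ φ' t * P * (K₂ * t * S ^ (p₂ - 1)) := by
        linarith [mul_le_mul_of_nonneg_right h3 (le_of_lt hPpos), hmul1]
      have h5 : 1 / (K₂ * t * S ^ (p₂ - 1)) ≤ φ' t * P := (div_le_iff₀ hKtS).mpr (by linarith)
      have hct : c * t⁻¹ = (p₁ - 1) * (1 / (K₂ * t * S ^ (p₂ - 1))) := by
        have ht0 : t ≠ 0 := ne_of_gt htpos
        have hS0' : S ^ (p₂ - 1) ≠ 0 := ne_of_gt hSp
        have hK₂0 : K₂ ≠ 0 := ne_of_gt hK₂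
        rw [hcdef]
        field_simp
        try ring
        try exact Or.inl trivial
      have h6 : c * t⁻¹ ≤ (p₁ - 1) * (φ' t * P) := by
        rw [hct]
        exact mul_le_mul_of_nonneg_left h5 (by linarith)
      linarith [h6]
  -- extract the key inequality
  rw [hlogt₁, hlogt₂] at hC2
  have hφt₂nn : 0 ≤ φ t₂ ^ (1 - p₁) :=
    Real.rpow_nonneg (le_trans (le_of_lt hLpos) (hφB t₂ ⟨le_of_lt ht₁t₂, le_refl _⟩)) _
  have hφt₁le : φ t₁ ^ (1 - p₁) ≤ L ^ (1 - p₁) :=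
    Real.rpow_le_rpow_of_nonpos hLpos hL (by linarith)
  have hKI : c * (S / 2) ≤ L ^ (1 - p₁) := by linarith
  -- take logarithms
  have hLrpos : 0 < L ^ (1 - p₁) := Real.rpow_pos_of_pos hLpos _
  have hcS : 0 < c * (S / 2) := by positivity
  have hlogKI : Real.log (c * (S / 2)) ≤ Real.log (L ^ (1 - p₁)) :=
    Real.log_le_log hcS hKI
  have hexpand1 : Real.log (c * (S / 2)) =
      Real.log (p₁ - 1) - Real.log K₂ - (p₂ - 1) * Real.log S + Real.log S - Real.log 2 := by
    rw [Real.log_mul (ne_of_gt hcpos) (ne_of_gt (by linarith : (0:ℝ) < S / 2)),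
      hcdef, Real.log_div (ne_of_gt hp₁1) (ne_of_gt (by positivity)),
      Real.log_mul (ne_of_gt hK₂) (ne_of_gt hSp), Real.log_rpow hS0,
      Real.log_div (ne_of_gt hS0) (by norm_num)]
    ring
  have hexpand2 : Real.log (L ^ (1 - p₁)) =
      (1 - p₁) * (Real.log δ + Real.log S - Real.log (4 * K₁)) := by
    rw [Real.log_rpow hLpos, hLdef,
      Real.log_div (ne_of_gt (by positivity)) (ne_of_gt (by positivity)),
      Real.log_mul (ne_of_gt hδ) (ne_of_gt hS0)]
  rw [hexpand1, hexpand2] at hlogKI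
  -- express log S
  have hlogS : Real.log S = Real.log K₃ + -((p₁ - 1) / (p₁ - p₂ + 1)) * Real.log δ := by
    rw [hSdef, Real.log_mul (ne_of_gt hK₃pos) (ne_of_gt (by linarith)), hEdef,
      Real.log_rpow hδ]
  -- the coefficient identity
  have hkey : (p₁ - p₂ + 1) * Real.log S =
      (p₁ - p₂ + 1) * Real.log K₃ - (p₁ - 1) * Real.log δ := by
    have hcoef : (p₁ - p₂ + 1) * ((p₁ - 1) / (p₁ - p₂ + 1)) = p₁ - 1 := by
      field_simp
    rw [hlogS]
    linear_combination (-Real.log δ) * hcoef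
  -- expand log C
  have hlogC : Real.log C = Real.log 2 + Real.log K₂ - Real.log (p₁ - 1)
      + (p₁ - 1) * Real.log (4 * K₁) := by
    rw [hCdef, Real.log_mul (ne_of_gt (by positivity))
        (ne_of_gt (Real.rpow_pos_of_pos (by positivity) _)),
      Real.log_div (ne_of_gt (by positivity)) (ne_of_gt hp₁1),
      Real.log_mul (by norm_num) (ne_of_gt hK₂), Real.log_rpow (by positivity)]
    try ring
  linarith [hlogKI, hkey, hK₃C, hlogC]
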